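/- arXiv:1111.0670 — 2 statements merged into one kernel-verified Lean document; each statement's English description precedes it below -/
import Mathlib

section
/- Given two CRAs M₁ and M₂ over the cost model (ℚ, +), there exists a CRA M over (ℚ, +) such that M(w) = M₁(w) − M₂(w) for all input strings w. -/
/-- A cost register automaton over the additive grammar `G(⊗)` for a commutative
monoid `(D, ⊗)` (written additively): a deterministic finite-state machine with
finitely many write-only registers, where each register is updated at each step to
a `⊗`-sum of registers (with multiplicities) and a constant. -/
structure AddCRA (σ D : Type*) where
  Q : Type*
  finQ : Fintype Q
  q0 : Q
  X : Type*
  finX : Fintype X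
  δ : Q → σ → Q
  /-- `ρ q a x = (coef, c)` means `x := (⊗_y coef y • y) ⊗ c`. -/
  ρ : Q → σ → X → (X → ℕ) × D
  μ : Q → Option ((X → ℕ) × D)

namespace AddCRA

variable {σ D : Type*} [AddCommMonoid D]

/-- Value of an update expression under a register valuation. -/
def evalE (M : AddCRA σ D) (ν : M.X → D) (e : (M.X → ℕ) × D) : D :=
  letI := M.finX
  (∑ x, e.1 x • ν x) + e.2

/-- One step of the machine on input symbol `a`. -/
def step (M : AddCRA σ D) (cfg : M.Q × (M.X → D)) (a : σ) : M.Q × (M.X → D) :=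
  (M.δ cfg.1 a, fun x => M.evalE cfg.2 (M.ρ cfg.1 a x))

/-- The configuration reached on input word `w`, registers initialized to `0`. -/
def run (M : AddCRA σ D) (w : List σ) : M.Q × (M.X → D) :=
  w.foldl M.step (M.q0, fun _ => 0)

/-- The (partial) output of the machine on input word `w`. -/
def output (M : AddCRA σ D) (w : List σ) : Option D :=
  (M.μ (M.run w).1).map (M.evalE (M.run w).2)

/-- A CRA is copyless if in each transition every register appears at most once
across all right-hand sides of register updates, and at most once in each output
expression. -/
def Copyless (M : AddCRA σ D) : Prop :=
  (∀ q a (x : M.X), (letI := M.finX; ∑ y, (M.ρ q a y).1 x) ≤ 1) ∧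
  (∀ q e, M.μ q = some e → ∀ x, e.1 x ≤ 1)

end AddCRA

/-! Run `M₁` and `M₂` side by side on disjoint register banks, with every constant of `M₂`
negated, and output the sum of the two output expressions. Registers are updated by linear
expressions, so negating the constants negates every register value of `M₂`, and the sum
is `M₁(w) − M₂(w)`. -/

namespace AddCRA

variable {σ D : Type*}

section AddCommMonoid

variable [AddCommMonoid D]

theorem run_append_singleton (M : AddCRA σ D) (w : List σ) (a : σ) :
    M.run (w ++ [a]) = M.step (M.run w) a := by
  simp only [run, List.foldl_append, List.foldl_cons, List.foldl_nil]

@[simp]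
theorem evalE_zero (M : AddCRA σ D) (ν : M.X → D) : M.evalE ν 0 = 0 := by
  simp [evalE]

def relabel (M : AddCRA σ D) {Q' X' : Type*} (eQ : M.Q ≃ Q') (eX : M.X ≃ X') :
    AddCRA σ D where
  Q := Q'
  finQ := letI := M.finQ; Fintype.ofEquiv M.Q eQ
  q0 := eQ M.q0
  X := X'
  finX := letI := M.finX; Fintype.ofEquiv M.X eX
  δ q a := eQ (M.δ (eQ.symm q) a)
  ρ q a x := Prod.map (· ∘ eX.symm) id (M.ρ (eQ.symm q) a (eX.symm x))
  μ q := (M.μ (eQ.symm q)).map (Prod.map (· ∘ eX.symm) id)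

section relabel

variable (M : AddCRA σ D) {Q' X' : Type*} (eQ : M.Q ≃ Q') (eX : M.X ≃ X')

theorem evalE_relabel (ν : M.X → D) (e : (M.X → ℕ) × D) :
    (M.relabel eQ eX).evalE (ν ∘ eX.symm) (Prod.map (· ∘ eX.symm) id e) = M.evalE ν e := by
  let := M.finX
  let : Fintype X' := Fintype.ofEquiv M.X eX
  simp only [evalE, relabel]
  congr 1
  exact (Fintype.sum_equiv eX _ _ fun x => by simp).symm

theorem run_relabel (w : List σ) :
    (M.relabel eQ eX).run w = (eQ (M.run w).1, (M.run w).2 ∘ eX.symm) := by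
  induction w using List.reverseRecOn with
  | nil => rfl
  | append_singleton w a ih =>
    rw [run_append_singleton, run_append_singleton, ih]
    refine Prod.ext (by simp [step, relabel]) (funext fun x => ?_)
    simp only [step, relabel, Equiv.symm_apply_apply]
    exact M.evalE_relabel eQ eX (M.run w).2 (M.ρ (M.run w).1 a (eX.symm x))

theorem output_relabel (w : List σ) : (M.relabel eQ eX).output w = M.output w := by
  rw [output, output, run_relabel]
  simp only [relabel, Equiv.symm_apply_apply, Option.map_map]
  congr 1
  funext e
  exact M.evalE_relabel eQ eX (M.run w).2 e

end relabel

def sumExpr {X Y : Type*} (e₁ : (X → ℕ) × D) (e₂ : (Y → ℕ) × D) : (X ⊕ Y → ℕ) × D :=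
  (Sum.elim e₁.1 e₂.1, e₁.2 + e₂.2)

def add (M₁ M₂ : AddCRA σ D) : AddCRA σ D where
  Q := M₁.Q × M₂.Q
  finQ := letI := M₁.finQ; letI := M₂.finQ; inferInstance
  q0 := (M₁.q0, M₂.q0)
  X := M₁.X ⊕ M₂.X
  finX := letI := M₁.finX; letI := M₂.finX; inferInstance
  δ q a := (M₁.δ q.1 a, M₂.δ q.2 a)
  ρ q a := Sum.elim (fun x => sumExpr (M₁.ρ q.1 a x) 0) (fun x => sumExpr 0 (M₂.ρ q.2 a x))
  μ q := Option.map₂ sumExpr (M₁.μ q.1) (M₂.μ q.2)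

section add

variable (M₁ M₂ : AddCRA σ D)

theorem evalE_add_sumExpr (ν₁ : M₁.X → D) (ν₂ : M₂.X → D) (e₁ : (M₁.X → ℕ) × D)
    (e₂ : (M₂.X → ℕ) × D) :
    (M₁.add M₂).evalE (Sum.elim ν₁ ν₂) (sumExpr e₁ e₂) = M₁.evalE ν₁ e₁ + M₂.evalE ν₂ e₂ := by
  let := M₁.finX; let := M₂.finX
  show ∑ x : M₁.X ⊕ M₂.X, _ + _ = _
  simp only [evalE, sumExpr, Fintype.sum_sum_type, Sum.elim_inl, Sum.elim_inr]
  abel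

theorem run_add (w : List σ) :
    (M₁.add M₂).run w =
      (((M₁.run w).1, (M₂.run w).1), Sum.elim (M₁.run w).2 (M₂.run w).2) := by
  induction w using List.reverseRecOn with
  | nil => exact Prod.ext rfl (funext fun x => by cases x <;> rfl)
  | append_singleton w a ih =>
    rw [run_append_singleton, run_append_singleton, run_append_singleton, ih]
    refine Prod.ext rfl (funext fun x => ?_)
    cases x with
    | inl x =>
      exact (M₁.evalE_add_sumExpr M₂ _ _ (M₁.ρ (M₁.run w).1 a x) 0).trans (by simp [step])
    | inr x =>
      exact (M₁.evalE_add_sumExpr M₂ _ _ 0 (M₂.ρ (M₂.run w).1 a x)).trans (by simp [step])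

theorem output_add (w : List σ) :
    (M₁.add M₂).output w = Option.map₂ (· + ·) (M₁.output w) (M₂.output w) := by
  rw [output, output, output, run_add]
  show Option.map _ (Option.map₂ sumExpr (M₁.μ _) (M₂.μ _)) = _
  rcases M₁.μ (M₁.run w).1 with _ | e₁ <;> rcases M₂.μ (M₂.run w).1 with _ | e₂
  · rfl
  · rfl
  · rfl
  · exact congrArg some (M₁.evalE_add_sumExpr M₂ _ _ e₁ e₂)

end add

end AddCommMonoid

section AddCommGroup

variable [AddCommGroup D]

def neg (M : AddCRA σ D) : AddCRA σ D :=
  { M with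
    ρ q a x := Prod.map id Neg.neg (M.ρ q a x)
    μ q := (M.μ q).map (Prod.map id Neg.neg) }

variable (M : AddCRA σ D)

theorem evalE_neg (ν : M.X → D) (e : (M.X → ℕ) × D) :
    M.neg.evalE (-ν) (Prod.map id Neg.neg e) = -M.evalE ν e := by
  let := M.finX
  show ∑ x, e.1 x • -ν x + -e.2 = -(∑ x, e.1 x • ν x + e.2)
  simp only [smul_neg, Finset.sum_neg_distrib, neg_add]

theorem run_neg (w : List σ) : M.neg.run w = ((M.run w).1, -(M.run w).2) := by
  induction w using List.reverseRecOn with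
  | nil => exact Prod.ext rfl (funext fun _ => neg_zero.symm)
  | append_singleton w a ih =>
    rw [run_append_singleton, run_append_singleton, ih]
    exact Prod.ext rfl (funext fun x => M.evalE_neg _ _)

theorem output_neg (w : List σ) : M.neg.output w = (M.output w).map Neg.neg := by
  rw [output, output, run_neg]
  simp only [neg, Option.map_map]
  congr 1
  funext e
  exact M.evalE_neg _ e

end AddCommGroup

end AddCRA

/-- Given two CRAs `M₁`, `M₂` over the cost model `(ℚ, +)`, there is a CRA `M`
over `(ℚ, +)` computing the pointwise difference: whenever both `M₁(w)` and
`M₂(w)` are defined, `M(w) = M₁(w) − M₂(w)`. -/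
theorem AddCRA.diff_closure {σ : Type*} (M₁ M₂ : AddCRA σ ℚ) :
    ∃ M : AddCRA σ ℚ,
      ∀ (w : List σ) (d₁ d₂ : ℚ),
        M₁.output w = some d₁ → M₂.output w = some d₂ →
          M.output w = some (d₁ - d₂) := by
  let := (M₁.add M₂.neg).finQ
  let := (M₁.add M₂.neg).finX
  -- `relabel` moves the product into the universes the existential asks for
  refine ⟨(M₁.add M₂.neg).relabel (equivShrink _) (equivShrink _), fun w d₁ d₂ h₁ h₂ => ?_⟩
  rw [output_relabel, output_add, output_neg, h₁, h₂, sub_eq_add_neg]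
  rfl
end

section
/- If (D, ⊕, ⊗) is a semiring, then conversely every CRA over (D, ⊕, ⊗c) with states Q and registers X is equivalent to a weighted automaton over (D, ⊕, ⊗) with state set (Q × X) ∪ Q; hence the class of functions computed by CRAs over (D, ⊕, ⊗c) equals the class of functions computed by weighted automata over (D, ⊕, ⊗). -/
/-- A weighted automaton over a semiring `(D, ⊕, ⊗)`, in functional form: initial
weights, final weights, and transition weights (weight `0̄` meaning absence of a
transition). It computes, on input `w`, the `⊕`-sum over all accepting paths on
`w` of the `⊗`-products of initial, transition, and final weights. -/
structure WAF (σ D : Type*) where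
  P : Type
  finP : Fintype P
  ini : P → D
  fin : P → D
  wt : P → σ → P → D

namespace WAF

variable {σ D : Type*} [Semiring D]

/-- The forward vector: `fwd w p` is the `⊕`-sum, over all paths from an initial
state to `p` reading `w`, of the `⊗`-product of the initial weight and the
transition weights along the path. -/
def fwd (W : WAF σ D) (w : List σ) : W.P → D :=
  letI := W.finP
  w.foldl (fun v a p => ∑ p', v p' * W.wt p' a p) W.ini

/-- The value computed by the weighted automaton on input `w`. -/
def val (W : WAF σ D) (w : List σ) : D :=
  letI := W.finP
  ∑ p, W.fwd w p * W.fin p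

end WAF

/-- A (deterministic) cost register automaton over `(D, ⊕, ⊗c)`: registers over
`D` are updated by `⊕`-combinations of terms `x ⊗ c` (registers scaled by
constants) plus a constant; registers may be copied. -/
structure LinCRA (σ D : Type*) where
  Q : Type
  finQ : Fintype Q
  q0 : Q
  X : Type
  finX : Fintype X
  initv : X → D
  δ : Q → σ → Q
  /-- `ρ q a x = (coef, c)` means `x := (⊕_y y ⊗ coef y) ⊕ c`. -/
  ρ : Q → σ → X → (X → D) × D
  μ : Q → (X → D) × D

namespace LinCRA

variable {σ D : Type*} [Semiring D]

/-- Value of a linear update expression under a register valuation. -/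
def evalE (M : LinCRA σ D) (ν : M.X → D) (e : (M.X → D) × D) : D :=
  letI := M.finX
  (∑ x, ν x * e.1 x) + e.2

/-- One step of the machine. -/
def step (M : LinCRA σ D) (cfg : M.Q × (M.X → D)) (a : σ) : M.Q × (M.X → D) :=
  (M.δ cfg.1 a, fun x => M.evalE cfg.2 (M.ρ cfg.1 a x))

/-- The configuration reached on input `w`. -/
def run (M : LinCRA σ D) (w : List σ) : M.Q × (M.X → D) :=
  w.foldl M.step (M.q0, M.initv)

/-- The output of the machine on input `w`. -/
def val (M : LinCRA σ D) (w : List σ) : D :=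
  M.evalE (M.run w).2 (M.μ (M.run w).1)

end LinCRA

/-! A configuration `(q, ν)` of the CRA is encoded as the weight vector on `(Q × X) ⊕ Q` that is
`ν` on `{q} × X`, `1` at `q` and `0` elsewhere. The `Q`-part records the current state and carries
the constant term, so a CRA step, which is affine in `ν`, becomes linear on encodings: it is the
step of a weighted automaton, and reading the output is a final-weight vector. Conversely, a
weighted automaton is a one-state CRA whose registers hold its forward vector. -/

attribute [local instance] WAF.finP LinCRA.finQ LinCRA.finX

namespace LinCRA

variable {σ D : Type*} [Semiring D] (M : LinCRA σ D)

open Classical in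
noncomputable def encode (cfg : M.Q × (M.X → D)) : (M.Q × M.X) ⊕ M.Q → D :=
  Sum.elim (fun qx => if qx.1 = cfg.1 then cfg.2 qx.2 else 0)
    (fun q => if q = cfg.1 then 1 else 0)

open Classical in
noncomputable def transWt : (M.Q × M.X) ⊕ M.Q → σ → (M.Q × M.X) ⊕ M.Q → D
  | .inl (q, x), a, .inl (q', x') => if q' = M.δ q a then (M.ρ q a x').1 x else 0
  | .inr q, a, .inl (q', x') => if q' = M.δ q a then (M.ρ q a x').2 else 0
  | .inr q, a, .inr q' => if q' = M.δ q a then 1 else 0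
  | .inl _, _, .inr _ => 0

def finWt : (M.Q × M.X) ⊕ M.Q → D :=
  Sum.elim (fun qx => (M.μ qx.1).1 qx.2) (fun q => (M.μ q).2)

noncomputable def toWAF : WAF σ D :=
  ⟨(M.Q × M.X) ⊕ M.Q, inferInstance, M.encode (M.q0, M.initv), M.finWt, M.transWt⟩

theorem sum_encode_mul_transWt (cfg : M.Q × (M.X → D)) (a : σ) (p : (M.Q × M.X) ⊕ M.Q) :
    ∑ p', M.encode cfg p' * M.transWt p' a p = M.encode (M.step cfg a) p := by
  classical
  rcases p with ⟨q', x'⟩ | q' <;>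
  · simp only [encode, transWt, step, evalE, Fintype.sum_sum_type, Fintype.sum_prod_type,
      Sum.elim_inl, Sum.elim_inr, ite_mul, zero_mul, Finset.sum_ite_irrel, Finset.sum_const_zero,
      Finset.sum_ite_eq', Finset.mem_univ, if_true]
    by_cases h : q' = M.δ cfg.1 a <;> simp [h]

theorem sum_encode_mul_finWt (cfg : M.Q × (M.X → D)) :
    ∑ p, M.encode cfg p * M.finWt p = M.evalE cfg.2 (M.μ cfg.1) := by
  classical
  simp [encode, finWt, evalE, Fintype.sum_sum_type, Fintype.sum_prod_type, ite_mul]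

theorem toWAF_fwd (w : List σ) : M.toWAF.fwd w = M.encode (M.run w) :=
  List.foldl_hom M.encode fun cfg a => funext (M.sum_encode_mul_transWt cfg a)

theorem toWAF_val (w : List σ) : M.toWAF.val w = M.val w := by
  rw [WAF.val, toWAF_fwd]
  exact M.sum_encode_mul_finWt (M.run w)

end LinCRA

namespace WAF

variable {σ D : Type*} [Semiring D] (W : WAF σ D)

def toLinCRA : LinCRA σ D where
  Q := Unit
  finQ := inferInstance
  q0 := ()
  X := W.P
  finX := W.finP
  initv := W.ini
  δ _ _ := ()
  ρ _ a x' := (fun x => W.wt x a x', 0)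
  μ _ := (W.fin, 0)

theorem toLinCRA_run_snd (w : List σ) : (W.toLinCRA.run w).2 = W.fwd w :=
  (List.foldl_hom Prod.snd fun _ _ => funext fun _ => (add_zero _).symm).symm

theorem toLinCRA_val (w : List σ) : W.toLinCRA.val w = W.val w := by
  rw [LinCRA.val, LinCRA.evalE, toLinCRA_run_snd]
  exact add_zero _

end WAF

/-- Conversely, if `(D, ⊕, ⊗)` is a semiring, every CRA over `(D, ⊕, ⊗c)` with
states `Q` and registers `X` is equivalent to a weighted automaton with state set
`(Q × X) ⊕ Q`; hence the class of functions computed by CRAs over `(D, ⊕, ⊗c)`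
equals the class of functions computed by weighted automata over `(D, ⊕, ⊗)`. -/
theorem LinCRA.to_WAF {σ D : Type*} [Semiring D] :
    (∀ M : LinCRA σ D,
      ∃ (W : WAF σ D) (_ : W.P ≃ ((M.Q × M.X) ⊕ M.Q)),
        ∀ w, W.val w = M.val w) ∧
    ({f : List σ → D | ∃ M : LinCRA σ D, ∀ w, M.val w = f w} =
      {f | ∃ W : WAF σ D, ∀ w, W.val w = f w}) := by
  refine ⟨fun M => ⟨M.toWAF, Equiv.refl _, M.toWAF_val⟩, ?_⟩
  ext f
  constructor
  · rintro ⟨M, hM⟩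
    exact ⟨M.toWAF, fun w => (M.toWAF_val w).trans (hM w)⟩
  · rintro ⟨W, hW⟩
    exact ⟨W.toLinCRA, fun w => (W.toLinCRA_val w).trans (hW w)⟩
end
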